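/- arXiv:2405.17474 — 2 statements merged into one kernel-verified Lean document; each statement's English description precedes it below -/
import Mathlib

section
/- Let p1 and p2 be two Markov transition kernels on a finite state space S with the same initial state distribution, and let p_{1,h}, p_{2,h} denote the state marginal distributions at time step h under p1 and p2 respectively. If for all time steps h, the expected total variation distance satisfies E_{s ~ p_{1,h}}[D_TV(p1(·|s), p2(·|s))] ≤ ε, then for every h, D_TV(p_{1,h}, p_{2,h}) ≤ h·ε. -/
open Finset

/-- State marginal after `h` steps of the kernel `p` starting from `μ`. -/
def marginal {S : Type*} [Fintype S] (p : S → S → ℝ) (μ : S → ℝ) : ℕ → S → ℝ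
  | 0 => μ
  | h + 1 => fun s => ∑ s', marginal p μ h s' * p s' s

/-- Total variation distance between two pmfs on a finite set. -/
noncomputable def tvDist {S : Type*} [Fintype S] (μ ν : S → ℝ) : ℝ :=
  (1 / 2) * ∑ s, |μ s - ν s|

theorem tv_propagation {S : Type*} [Fintype S]
    (p1 p2 : S → S → ℝ) (μ0 : S → ℝ) (ε : ℝ)
    (hp1 : ∀ s s', 0 ≤ p1 s s') (hp2 : ∀ s s', 0 ≤ p2 s s')
    (hp1sum : ∀ s, ∑ s', p1 s s' = 1) (hp2sum : ∀ s, ∑ s', p2 s s' = 1)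
    (hμ0 : ∀ s, 0 ≤ μ0 s) (hμ0sum : ∑ s, μ0 s = 1)
    (hε : ∀ h : ℕ, ∑ s, marginal p1 μ0 h s * tvDist (p1 s) (p2 s) ≤ ε) :
    ∀ h : ℕ, tvDist (marginal p1 μ0 h) (marginal p2 μ0 h) ≤ h * ε := by

  have hnn : ∀ h s, 0 ≤ marginal p1 μ0 h s := by
    intro h
    induction h with
    | zero => exact hμ0
    | succ n ih =>
      intro s
      exact Finset.sum_nonneg fun s' _ => mul_nonneg (ih s') (hp1 s' s)
  intro h
  induction h with
  | zero =>
    simp [tvDist, marginal]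
  | succ n ih =>
    have key : tvDist (marginal p1 μ0 (n+1)) (marginal p2 μ0 (n+1)) ≤
        tvDist (marginal p1 μ0 n) (marginal p2 μ0 n) +
        ∑ s, marginal p1 μ0 n s * tvDist (p1 s) (p2 s) := by
      have step : ∀ s : S, |marginal p1 μ0 (n+1) s - marginal p2 μ0 (n+1) s| ≤
          ∑ s', (marginal p1 μ0 n s' * |p1 s' s - p2 s' s|
            + |marginal p1 μ0 n s' - marginal p2 μ0 n s'| * p2 s' s) := by
        intro s
        have : marginal p1 μ0 (n+1) s - marginal p2 μ0 (n+1) s =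
            ∑ s', (marginal p1 μ0 n s' * (p1 s' s - p2 s' s)
              + (marginal p1 μ0 n s' - marginal p2 μ0 n s') * p2 s' s) := by
          simp only [marginal]
          rw [← Finset.sum_sub_distrib]
          refine Finset.sum_congr rfl fun s' _ => by ring
        rw [this]
        refine (Finset.abs_sum_le_sum_abs _ _).trans ?_
        refine Finset.sum_le_sum fun s' _ => ?_
        refine (abs_add_le _ _).trans ?_
        rw [abs_mul, abs_mul, abs_of_nonneg (hnn n s'), abs_of_nonneg (hp2 s' s)]
      have hsum : ∑ s, |marginal p1 μ0 (n+1) s - marginal p2 μ0 (n+1) s| ≤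
          ∑ s', |marginal p1 μ0 n s' - marginal p2 μ0 n s'|
          + ∑ s', marginal p1 μ0 n s' * (∑ s, |p1 s' s - p2 s' s|) := by
        calc ∑ s, |marginal p1 μ0 (n+1) s - marginal p2 μ0 (n+1) s|
            ≤ ∑ s, ∑ s', (marginal p1 μ0 n s' * |p1 s' s - p2 s' s|
              + |marginal p1 μ0 n s' - marginal p2 μ0 n s'| * p2 s' s) :=
              Finset.sum_le_sum fun s _ => step s
          _ = ∑ s', marginal p1 μ0 n s' * (∑ s, |p1 s' s - p2 s' s|)
              + ∑ s', |marginal p1 μ0 n s' - marginal p2 μ0 n s'| * (∑ s, p2 s' s) := by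
              rw [Finset.sum_comm]
              rw [← Finset.sum_add_distrib]
              refine Finset.sum_congr rfl fun s' _ => by
                rw [Finset.sum_add_distrib, Finset.mul_sum, Finset.mul_sum]
          _ = ∑ s', |marginal p1 μ0 n s' - marginal p2 μ0 n s'|
              + ∑ s', marginal p1 μ0 n s' * (∑ s, |p1 s' s - p2 s' s|) := by
              rw [add_comm]
              congr 1
              refine Finset.sum_congr rfl fun s' _ => by rw [hp2sum s', mul_one]
      simp only [tvDist]
      have := mul_le_mul_of_nonneg_left hsum (by norm_num : (0:ℝ) ≤ 1/2)
      refine this.trans_eq ?_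
      rw [mul_add]
      congr 1
      rw [Finset.mul_sum]
      refine Finset.sum_congr rfl fun s' _ => by ring
    calc tvDist (marginal p1 μ0 (n+1)) (marginal p2 μ0 (n+1))
        ≤ tvDist (marginal p1 μ0 n) (marginal p2 μ0 n) +
          ∑ s, marginal p1 μ0 n s * tvDist (p1 s) (p2 s) := key
      _ ≤ n * ε + ε := add_le_add ih (hε n)
      _ = ((n:ℕ) + 1 : ℕ) * ε := by push_cast; ring
end

section
/- Let D be a pseudometric on policies satisfying the triangle inequality, let λ1, λ2 > 0, and suppose δ_π > 0 is defined so that λ2·δ_π·D(π, π^b) = (β/(1−γ))·(g(ρ^π) − g(ρ^b)). If λ1 > (1−δ_π)·λ2 and D(π, π^b) > 0, then σ^b := (β/(1−γ))·(g(ρ^π) − g(ρ^b)) + λ2·D(π, π̄) + λ1·D(π, π^b) − λ2·D(π̄, π^b) > 0. -/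
theorem sigma_b_pos {Pol : Type*}
    (D : Pol → Pol → ℝ) (g : Pol → ℝ) (π πbar πb : Pol)
    (lam1 lam2 β γ δπ : ℝ)
    (hlam1 : 0 < lam1) (hlam2 : 0 < lam2) (hβ : 0 ≤ β)
    (hγ : γ ∈ Set.Ioo (0 : ℝ) 1) (hδπ : 0 < δπ)
    (hDnonneg : ∀ p q : Pol, 0 ≤ D p q)
    (htriangle : D πbar πb ≤ D π πbar + D π πb)
    (hδdef : lam2 * δπ * D π πb = (β / (1 - γ)) * (g π - g πb))
    (hlam : (1 - δπ) * lam2 < lam1)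
    (hDpos : 0 < D π πb) :
    0 < (β / (1 - γ)) * (g π - g πb) + lam2 * D π πbar + lam1 * D π πb -
        lam2 * D πbar πb := by
  nlinarith [mul_pos (sub_pos.mpr hlam) hDpos, mul_le_mul_of_nonneg_left htriangle hlam2.le, hδdef]
end
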